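/- For every integer n ≥ 0 and every s ∈ ℂ with Re(s) > 1, the recurrence 𝒞(2n,1;s) = Σ_{l=0}^{n} C(n,l)·(−1)^l·𝒞(2l,1;s) holds, where C(n,l) is the binomial coefficient. Consequently, for n even this yields the identity Σ_{l=0}^{2k−1} C(2k,l)·(−1)^l·𝒞(2l,1;s) = 0 (writing n = 2k), while for n odd it expresses 𝒞(4k−2,1;s) in terms of lower-order sums: 𝒞(4k−2,1;s) = (1/2)·Σ_{l=0}^{2k−2} C(2k−1,l)·(−1)^l·𝒞(2l,1;s) (writing n = 2k−1). -/

import Mathlib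

/-- The angle `θ_{p₁,p₂} = arg(p₁ + i p₂)` of a lattice point. -/
noncomputable def latticeAngle (p : ℤ × ℤ) : ℝ :=
  Complex.arg ((p.1 : ℂ) + (p.2 : ℂ) * Complex.I)

/-- The angular lattice sum `𝒞(n,m;s)`. -/
noncomputable def latC (n m : ℕ) (s : ℂ) : ℂ :=
  ∑' p : {p : ℤ × ℤ // p ≠ 0},
    ((Real.cos ((m : ℝ) * latticeAngle p.1) : ℂ)) ^ n /
      (((p.1.1 : ℂ)) ^ 2 + ((p.1.2 : ℂ)) ^ 2) ^ s

/-- The angular lattice sum `𝒮(n,m;s)`. -/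
noncomputable def latS (n m : ℕ) (s : ℂ) : ℂ :=
  ∑' p : {p : ℤ × ℤ // p ≠ 0},
    ((Real.sin ((m : ℝ) * latticeAngle p.1) : ℂ)) ^ n /
      (((p.1.1 : ℂ)) ^ 2 + ((p.1.2 : ℂ)) ^ 2) ^ s

/-!
Swapping the coordinates `(p₁, p₂) ↦ (p₂, p₁)` turns `cos θ` into `sin θ`, so
`𝒮(2n,1;s) = 𝒞(2n,1;s)`. Expanding `sin^{2n} θ = (1 - cos² θ)^n` binomially and summing
termwise, which is legitimate since the sums converge absolutely for `Re s > 1`, gives the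
recurrence. The consequences are pure algebra: the `l = n` term of the recurrence is
`(-1)^n 𝒞(2n,1;s)`, which cancels the left-hand side for `n` even and doubles it for `n` odd.
-/

theorem one_sub_sq_pow_eq_sum {R : Type*} [CommRing R] (c : R) (n : ℕ) :
    (1 - c ^ 2) ^ n = ∑ l ∈ Finset.range (n + 1), (n.choose l : R) * (-1) ^ l * c ^ (2 * l) := by
  rw [sub_eq_neg_add, add_pow]
  refine Finset.sum_congr rfl fun l _ => ?_
  rw [neg_pow, pow_mul]
  ring

theorem sum_range_choose_mul_neg_one_pow_eq_zero_of_even {R : Type*} [Ring R] {a : ℕ → R} {n : ℕ}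
    (h : a n = ∑ l ∈ Finset.range (n + 1), (n.choose l : R) * (-1) ^ l * a l) (hn : Even n) :
    ∑ l ∈ Finset.range n, (n.choose l : R) * (-1) ^ l * a l = 0 := by
  rwa [Finset.sum_range_succ, Nat.choose_self, hn.neg_one_pow, Nat.cast_one, one_mul, one_mul,
    right_eq_add] at h

theorem eq_half_sum_range_choose_mul_neg_one_pow_of_odd {K : Type*} [DivisionRing K]
    [NeZero (2 : K)] {a : ℕ → K} {n : ℕ}
    (h : a n = ∑ l ∈ Finset.range (n + 1), (n.choose l : K) * (-1) ^ l * a l) (hn : Odd n) :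
    a n = 1 / 2 * ∑ l ∈ Finset.range n, (n.choose l : K) * (-1) ^ l * a l := by
  rw [Finset.sum_range_succ, Nat.choose_self, hn.neg_one_pow, Nat.cast_one, one_mul, neg_one_mul,
    eq_add_neg_iff_add_eq, ← two_mul] at h
  rw [← h, ← mul_assoc, one_div, inv_mul_cancel₀ two_ne_zero, one_mul]

open Complex ComplexConjugate in
theorem Complex.sin_arg_eq_cos_arg_I_mul_conj {z : ℂ} (hz : z ≠ 0) :
    Real.sin (arg z) = Real.cos (arg (I * conj z)) := by
  rw [sin_arg, cos_arg (by simpa using hz)]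
  simp

theorem sin_latticeAngle_eq_cos_latticeAngle_swap {p : ℤ × ℤ} (hp : p ≠ 0) :
    Real.sin (latticeAngle p) = Real.cos (latticeAngle p.swap) := by
  have hz : (p.1 : ℂ) + p.2 * Complex.I ≠ 0 := by
    contrapose! hp
    simpa [Complex.ext_iff, Prod.ext_iff] using hp
  rw [latticeAngle, latticeAngle, Complex.sin_arg_eq_cos_arg_I_mul_conj hz]
  congr 2
  apply Complex.ext <;> simp

theorem latS_one_eq_latC_one (n : ℕ) (s : ℂ) : latS n 1 s = latC n 1 s := by
  let swap : {p : ℤ × ℤ // p ≠ 0} ≃ {p : ℤ × ℤ // p ≠ 0} :=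
    (Equiv.prodComm ℤ ℤ).subtypeEquiv fun p => by simp [Prod.ext_iff, and_comm]
  rw [latC, ← swap.tsum_eq, latS]
  refine tsum_congr fun p => ?_
  simp only [Nat.cast_one, one_mul, swap, Equiv.subtypeEquiv_apply, Equiv.prodComm_apply,
    sin_latticeAngle_eq_cos_latticeAngle_swap p.2, Prod.fst_swap, Prod.snd_swap, add_comm]

theorem summable_sq_add_sq_rpow_neg {σ : ℝ} (hσ : 1 < σ) :
    Summable fun p : {p : ℤ × ℤ // p ≠ 0} => ((p.1.1 : ℝ) ^ 2 + (p.1.2 : ℝ) ^ 2) ^ (-σ) := by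
  have hsup : Summable fun p : ℤ × ℤ => ‖![p.1, p.2]‖ ^ (-(2 * σ)) := by
    simpa [Function.comp_def] using (finTwoArrowEquiv ℤ).symm.summable_iff.mpr
      (EisensteinSeries.summable_one_div_norm_rpow (by linarith : (2 : ℝ) < 2 * σ))
  refine (hsup.subtype _).of_nonneg_of_le (fun p => by positivity) fun ⟨(a, b), hp⟩ => ?_
  have hnorm : ‖![a, b]‖ = max |(a : ℝ)| |(b : ℝ)| := by
    simp [EisensteinSeries.norm_eq_max_natAbs]
  have hpos : 0 < ‖![a, b]‖ := by
    simpa [Prod.ext_iff] using hp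
  have hle : ‖![a, b]‖ ^ 2 ≤ (a : ℝ) ^ 2 + (b : ℝ) ^ 2 := by
    rw [hnorm]
    rcases max_cases |(a : ℝ)| |(b : ℝ)| with ⟨h, _⟩ | ⟨h, _⟩ <;>
      rw [h, sq_abs] <;> nlinarith [sq_nonneg (a : ℝ), sq_nonneg (b : ℝ)]
  calc ((a : ℝ) ^ 2 + (b : ℝ) ^ 2) ^ (-σ)
      ≤ (‖![a, b]‖ ^ 2) ^ (-σ) := Real.rpow_le_rpow_of_nonpos (by positivity) hle (by linarith)
    _ = ‖![a, b]‖ ^ (-(2 * σ)) := by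
      rw [← Real.rpow_natCast, ← Real.rpow_mul hpos.le]
      norm_num

theorem summable_latC_term (n m : ℕ) {s : ℂ} (hs : 1 < s.re) :
    Summable fun p : {p : ℤ × ℤ // p ≠ 0} =>
      (Real.cos ((m : ℝ) * latticeAngle p.1) : ℂ) ^ n /
        ((p.1.1 : ℂ) ^ 2 + (p.1.2 : ℂ) ^ 2) ^ s := by
  refine Summable.of_norm_bounded (summable_sq_add_sq_rpow_neg hs) fun p => ?_
  have hD : (p.1.1 : ℂ) ^ 2 + (p.1.2 : ℂ) ^ 2 = (((p.1.1 : ℝ) ^ 2 + (p.1.2 : ℝ) ^ 2 : ℝ) : ℂ) := by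
    push_cast; rfl
  rw [hD, norm_div, norm_pow, Complex.norm_real,
    Complex.norm_cpow_eq_rpow_re_of_nonneg (by positivity) (by linarith),
    Real.rpow_neg (by positivity), ← one_div]
  gcongr
  exact pow_le_one₀ (abs_nonneg _) (Real.abs_cos_le_one _)

theorem latC_two_mul_one_eq_sum {s : ℂ} (hs : 1 < s.re) (n : ℕ) :
    latC (2 * n) 1 s =
      ∑ l ∈ Finset.range (n + 1), (n.choose l : ℂ) * (-1) ^ l * latC (2 * l) 1 s := by
  rw [← latS_one_eq_latC_one, latS]
  have hterm : ∀ p : {p : ℤ × ℤ // p ≠ 0},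
      (Real.sin (((1 : ℕ) : ℝ) * latticeAngle p.1) : ℂ) ^ (2 * n) /
        ((p.1.1 : ℂ) ^ 2 + (p.1.2 : ℂ) ^ 2) ^ s =
      ∑ l ∈ Finset.range (n + 1), (n.choose l : ℂ) * (-1) ^ l *
        ((Real.cos (((1 : ℕ) : ℝ) * latticeAngle p.1) : ℂ) ^ (2 * l) /
          ((p.1.1 : ℂ) ^ 2 + (p.1.2 : ℂ) ^ 2) ^ s) := fun p => by
    rw [pow_mul, ← Complex.ofReal_pow, Real.sin_sq, Complex.ofReal_sub, Complex.ofReal_one,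
      Complex.ofReal_pow, one_sub_sq_pow_eq_sum, Finset.sum_div]
    simp only [mul_div_assoc]
  rw [tsum_congr hterm,
    Summable.tsum_finsetSum fun l _ => (summable_latC_term (2 * l) 1 hs).mul_left _]
  simp only [tsum_mul_left, latC]

/-- Binomial recurrence for the sums `𝒞(2n,1;s)` for `Re s > 1`, together with its
consequences: an identity for even `n = 2k` and an expression for `𝒞(4k-2,1;s)`
in terms of lower order sums for odd `n = 2k-1`. -/
theorem latC_binomial_recurrence (s : ℂ) (hs : 1 < s.re) :
    (∀ n : ℕ, latC (2 * n) 1 s =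
      ∑ l ∈ Finset.range (n + 1), (n.choose l : ℂ) * (-1) ^ l * latC (2 * l) 1 s) ∧
    (∀ k : ℕ, ∑ l ∈ Finset.range (2 * k),
      ((2 * k).choose l : ℂ) * (-1) ^ l * latC (2 * l) 1 s = 0) ∧
    (∀ k : ℕ, 1 ≤ k → latC (4 * k - 2) 1 s =
      (1 / 2) * ∑ l ∈ Finset.range (2 * k - 1),
        ((2 * k - 1).choose l : ℂ) * (-1) ^ l * latC (2 * l) 1 s) := by
  have hrec := latC_two_mul_one_eq_sum hs
  refine ⟨hrec, fun k => ?_, fun k hk => ?_⟩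
  · exact sum_range_choose_mul_neg_one_pow_eq_zero_of_even
      (a := fun l => latC (2 * l) 1 s) (hrec (2 * k)) (even_two_mul k)
  · rw [show 4 * k - 2 = 2 * (2 * k - 1) by omega]
    exact eq_half_sum_range_choose_mul_neg_one_pow_of_odd
      (a := fun l => latC (2 * l) 1 s) (hrec (2 * k - 1)) ⟨k - 1, by omega⟩
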